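/- Let n ≥ 3 and τ ∈ (n/2, n) be real numbers and set x₀ = (3(n−τ)/8)^{1/n}. Define F(x,λ) = λ(τ − n/2)/(λ + (1−λ)x^{τ−n/2}). If λ ∈ (0,1) satisfies F(x₀, λ) < 1/8, then for all x ∈ [0,1], F(x,λ) + x^n < (n + τ)/4. -/
import Mathlib


theorem F_plus_xn_lt (n τ : ℝ) (hn : 3 ≤ n) (hτ1 : n / 2 < τ) (hτ2 : τ < n)
    (lam : ℝ) (hlam : lam ∈ Set.Ioo (0 : ℝ) 1)
    (hF : lam * (τ - n / 2) /
        (lam + (1 - lam) * ((3 * (n - τ) / 8) ^ (1 / n)) ^ (τ - n / 2)) < 1 / 8) :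
    ∀ x ∈ Set.Icc (0 : ℝ) 1,
      lam * (τ - n / 2) / (lam + (1 - lam) * x ^ (τ - n / 2)) + x ^ n < (n + τ) / 4 := by
  obtain ⟨hl0, hl1⟩ := hlam
  set e := τ - n / 2 with he
  have hepos : 0 < e := by rw [he]; linarith
  have hnpos : (0:ℝ) < n := by linarith
  set a := 3 * (n - τ) / 8 with ha
  have hapos : 0 < a := by rw [ha]; linarith
  set x0 := a ^ (1/n) with hx0def
  have hx0nn : 0 ≤ x0 := Real.rpow_nonneg hapos.le _
  have hx0n : x0 ^ n = a := by
    rw [hx0def, ← Real.rpow_mul hapos.le, one_div, inv_mul_cancel₀ hnpos.ne',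
      Real.rpow_one]
  intro x hx
  obtain ⟨hxlo, hxhi⟩ := hx
  have hxe : 0 ≤ x ^ e := Real.rpow_nonneg hxlo e
  have h1l : (0:ℝ) ≤ 1 - lam := by linarith
  have hden : 0 < lam + (1 - lam) * x ^ e := by
    have := mul_nonneg h1l hxe
    linarith
  rcases le_or_gt x x0 with hcase | hcase
  · -- x ≤ x0 : F ≤ e and x^n ≤ a
    have hF1 : lam * e / (lam + (1 - lam) * x ^ e) ≤ e := by
      rw [div_le_iff₀ hden]
      nlinarith [mul_nonneg (mul_nonneg h1l hxe) hepos.le]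
    have hxn : x ^ n ≤ a := by
      rw [← hx0n]
      exact Real.rpow_le_rpow hxlo hcase hnpos.le
    have : e + a < (n + τ) / 4 := by rw [he, ha]; linarith
    linarith
  · -- x0 < x : F ≤ F(x0) < 1/8 and x^n ≤ 1
    have hx0e : 0 ≤ x0 ^ e := Real.rpow_nonneg hx0nn e
    have hd0 : 0 < lam + (1 - lam) * x0 ^ e := by
      have := mul_nonneg h1l hx0e
      linarith
    have hmono : x0 ^ e ≤ x ^ e := Real.rpow_le_rpow hx0nn hcase.le hepos.le
    have hF2 : lam * e / (lam + (1 - lam) * x ^ e)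
        ≤ lam * e / (lam + (1 - lam) * x0 ^ e) := by
      gcongr
    have hxn : x ^ n ≤ 1 := Real.rpow_le_one hxlo hxhi hnpos.le
    have h98 : (9:ℝ)/8 ≤ (n + τ) / 4 := by linarith
    linarith
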